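/- (Exponentially fast OSRB.) Let (M₁, …, M_t, C) be random variables on the finite set ∏_{i=1}^t ℳᵢ × 𝒞 with joint pmf p, and let (M₁([n]), …, M_t([n]), C([n])) denote n i.i.d. copies. Fix rates R₁, …, R_t > 0 and let 𝔅ᵢ : ℳᵢⁿ → [⌈2^{nRᵢ}⌉], i ∈ [t], be mutually independent uniformly random functions. Let M̄ᵢ = 𝔅ᵢ(Mᵢ([n])) and let P denote the joint pmf of (C([n]), M̄₁, …, M̄_t) induced by a fixed realization of the binnings. If for every nonempty subset S ⊆ [t] it holds that ∑_{i∈S} Rᵢ < H(M_S | C), then there exists a constant κ > 0 and an integer N such that for all n ≥ N: 𝔼_𝔅 ‖ P_{C([n]), M̄₁,…,M̄_t} − p_{C([n])} ⊗ ∏_{i=1}^t p^U_{[⌈2^{nRᵢ}⌉]} ‖₁ ≤ 2^{−κn}, where the expectation 𝔼_𝔅 is over the random choice of the binning functions and p^U_S denotes the uniform pmf on S. -/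

import Mathlib

/-!
Split the i.i.d. source sequence into its typical part, on which every empirical conditional
information `∑ⱼ -log p(m_S | c)` is at least `n (H(M_S|C) - δ)`, and the rest, whose mass decays
exponentially by a Chernoff bound. The typical part is compared with the ideal pmf through its
χ²-distance (Cauchy–Schwarz), averaged over the binnings with Jensen. The expected χ²-distance is a
collision sum: two sequences with the same `C([n])` fall into the same bins with probability
`∏ 1/kᵢ` over the sources on which they differ, `kᵢ = ⌈2^{nRᵢ}⌉`. Expanding `∏ kᵢ` over the
sources on which they agree as `∑_S ∏_{i∈S} (kᵢ - 1)`, the term of a nonempty `S` is at most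
`2^{n ∑_{i∈S} Rᵢ} · 2^{-n (H(M_S|C) - δ)}`, exponentially small because `∑_{i∈S} Rᵢ < H(M_S|C)`.
-/

open Finset

noncomputable section

namespace OSRB

variable {t : ℕ} {M : Fin t → Type} [∀ i, Fintype (M i)] [∀ i, DecidableEq (M i)]
  {C : Type} [Fintype C] [DecidableEq C]

/-- Marginal pmf of `C`. -/
def pC (p : ((∀ i, M i) × C) → ℝ) (c : C) : ℝ := ∑ m : ∀ i, M i, p (m, c)

/-- Joint pmf of `(M_S, C)` for a subset `S` of the messages. -/
def pSC (p : ((∀ i, M i) × C) → ℝ) (S : Finset (Fin t))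
    (f : ∀ i : S, M i.1) (c : C) : ℝ :=
  ∑ m : ∀ i, M i, if ∀ i : S, m i.1 = f i then p (m, c) else 0

/-- Conditional entropy `H(M_S | C)` in bits (terms with zero probability vanish,
since `Real.logb 2 0 = 0`). -/
def condEnt (p : ((∀ i, M i) × C) → ℝ) (S : Finset (Fin t)) : ℝ :=
  - ∑ f : ∀ i : S, M i.1, ∑ c : C,
      pSC p S f c * Real.logb 2 (pSC p S f c / pC p c)

/-- The number of bins `⌈2^{nRᵢ}⌉` for source `i` at blocklength `n`. -/
def nbins (R : Fin t → ℝ) (n : ℕ) (i : Fin t) : ℕ := ⌈(2 : ℝ) ^ ((n : ℝ) * R i)⌉₊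

/-- The pmf of `(C([n]), M̄₁, …, M̄_t)` induced by a fixed realization `𝔟` of the
binning functions, where `M̄ᵢ = 𝔟ᵢ(Mᵢ([n]))` and the underlying source is `n` i.i.d.
copies of `(M₁, …, M_t, C) ∼ p`. -/
def Pind (p : ((∀ i, M i) × C) → ℝ) (R : Fin t → ℝ) (n : ℕ)
    (𝔟 : ∀ i, (Fin n → M i) → Fin (nbins R n i))
    (c : Fin n → C) (mb : ∀ i, Fin (nbins R n i)) : ℝ :=
  ∑ ω : Fin n → ((∀ i, M i) × C),
    if (∀ j, (ω j).2 = c j) ∧ (∀ i, 𝔟 i (fun j => (ω j).1 i) = mb i)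
    then ∏ j, p (ω j) else 0

/-- The ideal pmf `p_{C([n])} ⊗ ∏ᵢ p^U_{[⌈2^{nRᵢ}⌉]}`. -/
def Qideal (p : ((∀ i, M i) × C) → ℝ) (R : Fin t → ℝ) (n : ℕ)
    (c : Fin n → C) (_mb : ∀ i, Fin (nbins R n i)) : ℝ :=
  (∏ j, pC p (c j)) * ∏ i, ((nbins R n i : ℝ))⁻¹

/-- The expected total variation distance
`𝔼_𝔅 ‖P_{C([n]),M̄} − p_{C([n])} ⊗ ∏ᵢ p^U‖₁`, where the expectation is the average
over all (uniformly random, mutually independent) binning functions. -/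
def Ebin (p : ((∀ i, M i) × C) → ℝ) (R : Fin t → ℝ) (n : ℕ) : ℝ :=
  (Fintype.card (∀ i, (Fin n → M i) → Fin (nbins R n i)) : ℝ)⁻¹ *
    ∑ 𝔟 : ∀ i, (Fin n → M i) → Fin (nbins R n i),
      2⁻¹ * ∑ c : Fin n → C, ∑ mb : ∀ i, Fin (nbins R n i),
        |Pind p R n 𝔟 c mb - Qideal p R n c mb|

section Pushforward

variable {Ω Z : Type*} [Fintype Ω] [DecidableEq Z]

def pushforward (f : Ω → Z) (w : Ω → ℝ) (z : Z) : ℝ :=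
  ∑ ω, if f ω = z then w ω else 0

lemma sum_pushforward_mul [Fintype Z] (f : Ω → Z) (w : Ω → ℝ) (g : Z → ℝ) :
    ∑ z, pushforward f w z * g z = ∑ ω, w ω * g (f ω) := by
  simp only [pushforward, sum_mul, ite_mul, zero_mul]
  rw [sum_comm]
  simp

lemma sum_pushforward [Fintype Z] (f : Ω → Z) (w : Ω → ℝ) : ∑ z, pushforward f w z = ∑ ω, w ω := by
  simpa using sum_pushforward_mul f w 1

lemma pushforward_add (f : Ω → Z) (w₁ w₂ : Ω → ℝ) (z : Z) :
    pushforward f (w₁ + w₂) z = pushforward f w₁ z + pushforward f w₂ z := by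
  simp only [pushforward, ← sum_add_distrib, Pi.add_apply]
  exact sum_congr rfl fun ω _ => by split_ifs <;> simp

lemma pushforward_nonneg {w : Ω → ℝ} (hw : ∀ ω, 0 ≤ w ω) (f : Ω → Z) (z : Z) :
    0 ≤ pushforward f w z :=
  sum_nonneg fun ω _ => by split_ifs <;> simp [hw]

lemma le_pushforward {w : Ω → ℝ} (hw : ∀ ω, 0 ≤ w ω) (f : Ω → Z) (ω : Ω) :
    w ω ≤ pushforward f w (f ω) :=
  le_of_eq_of_le (by simp) (single_le_sum (f := fun ω' => if f ω' = f ω then w ω' else 0)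
    (fun ω' _ => by split_ifs <;> simp [hw]) (mem_univ ω))

lemma pushforward_eq_zero {f : Ω → Z} {w : Ω → ℝ} {z : Z} (h : ∀ ω, f ω = z → w ω = 0) :
    pushforward f w z = 0 :=
  sum_eq_zero fun ω _ => by split_ifs with hω <;> simp [h ω, hω]

lemma sum_pushforward_sq_mul [Fintype Z] (f : Ω → Z) (w : Ω → ℝ) (g : Z → ℝ) :
    ∑ z, pushforward f w z ^ 2 * g z =
      ∑ ω, ∑ ω', if f ω = f ω' then w ω * w ω' * g (f ω) else 0 := by
  simp_rw [sq, mul_assoc, sum_pushforward_mul, pushforward, sum_mul, mul_sum]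
  refine sum_congr rfl fun ω _ => sum_congr rfl fun ω' _ => ?_
  split_ifs with h h' h' <;> simp_all [eq_comm]

lemma sum_abs_pushforward_add_sub_le [Fintype Z] {w₁ w₂ : Ω → ℝ} (hw₂ : ∀ ω, 0 ≤ w₂ ω)
    (f : Ω → Z) (Q : Z → ℝ) :
    ∑ z, |pushforward f (w₁ + w₂) z - Q z| ≤
      ∑ z, |pushforward f w₁ z - Q z| + ∑ ω, w₂ ω := by
  rw [← sum_pushforward f w₂, ← sum_add_distrib]
  refine sum_le_sum fun z _ => ?_
  rw [pushforward_add, add_sub_right_comm]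
  exact (abs_add_le _ _).trans_eq (by rw [abs_of_nonneg (pushforward_nonneg hw₂ f z)])

end Pushforward

section ChiSquare

variable {Z : Type*} [Fintype Z] {P Q : Z → ℝ}

/-- Terms with `Q z = 0` vanish since `x / 0 = 0`; the lemmas assume `P z = 0` there. -/
def chiSq (P Q : Z → ℝ) : ℝ := ∑ z, (P z - Q z) ^ 2 / Q z

lemma sum_abs_sub_le_sqrt_chiSq (hQ : ∀ z, 0 ≤ Q z) (hQ1 : ∑ z, Q z = 1)
    (hPQ : ∀ z, Q z = 0 → P z = 0) :
    ∑ z, |P z - Q z| ≤ √(chiSq P Q) := by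
  have key : ∀ z, |P z - Q z| = √(Q z) * √((P z - Q z) ^ 2 / Q z) := by
    intro z
    rcases (hQ z).eq_or_lt with h | h
    · simp [← h, hPQ z h.symm]
    · rw [← Real.sqrt_mul h.le, mul_div_cancel₀ _ h.ne', Real.sqrt_sq_eq_abs]
  simp_rw [key]
  calc _ ≤ √(∑ z, Q z) * √(chiSq P Q) :=
        Real.sum_sqrt_mul_sqrt_le _ hQ fun z => div_nonneg (sq_nonneg _) (hQ z)
    _ = √(chiSq P Q) := by rw [hQ1, Real.sqrt_one, one_mul]

lemma chiSq_eq (hPQ : ∀ z, Q z = 0 → P z = 0) :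
    chiSq P Q = ∑ z, P z ^ 2 / Q z - 2 * ∑ z, P z + ∑ z, Q z := by
  rw [chiSq, mul_sum, ← sum_sub_distrib, ← sum_add_distrib]
  refine sum_congr rfl fun z _ => ?_
  by_cases h : Q z = 0
  · simp [h, hPQ z h]
  · field_simp
    ring

lemma chiSq_nonneg (hQ : ∀ z, 0 ≤ Q z) : 0 ≤ chiSq P Q :=
  sum_nonneg fun z _ => div_nonneg (sq_nonneg _) (hQ z)

end ChiSquare

lemma avg_sqrt_le_sqrt_avg {B : Type*} [Fintype B] {V : B → ℝ} (hV : ∀ b, 0 ≤ V b) :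
    (Fintype.card B : ℝ)⁻¹ * ∑ b, √(V b) ≤ √((Fintype.card B : ℝ)⁻¹ * ∑ b, V b) := by
  have h := Real.sum_sqrt_mul_sqrt_le univ (fun _ => zero_le_one) hV
  simp only [Real.sqrt_one, one_mul, sum_const, card_univ, nsmul_eq_mul, mul_one] at h
  rw [Real.sqrt_mul (by positivity), Real.sqrt_inv]
  calc _ ≤ (Fintype.card B : ℝ)⁻¹ * (√(Fintype.card B) * √(∑ b, V b)) := by gcongr
    _ = _ := by
      rcases (Nat.cast_nonneg (Fintype.card B) : (0:ℝ) ≤ _).eq_or_lt with h0 | h0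
      · simp [← h0]
      · field_simp
        rw [Real.sq_sqrt h0.le]

section RandomBinning

lemma avg_apply_eq_apply {A B : Type*} [Fintype A] [DecidableEq A] [Fintype B] [DecidableEq B]
    [Nonempty B] (a a' : A) :
    (Fintype.card (A → B) : ℝ)⁻¹ * ∑ g : A → B, (if g a = g a' then 1 else 0) =
      if a = a' then 1 else (Fintype.card B : ℝ)⁻¹ := by
  split_ifs with h
  · subst h
    simp
  set e := Equiv.piSplitAt a' (fun _ : A => B)
  have hsum : ∑ g : A → B, (if g a = g a' then (1 : ℝ) else 0) =
      Fintype.card ({j // j ≠ a'} → B) := by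
    rw [← e.symm.sum_comp, Fintype.sum_prod_type, sum_comm]
    simp [e, Equiv.piSplitAt, h]
  have hcard : Fintype.card (A → B) = Fintype.card B * Fintype.card ({j // j ≠ a'} → B) := by
    rw [Fintype.card_congr e, Fintype.card_prod]
  rw [hsum, hcard]
  have : Fintype.card ({j // j ≠ a'} → B) ≠ 0 := Fintype.card_ne_zero
  push_cast
  field_simp

lemma avg_forall_apply_eq_apply {ι : Type*} [Fintype ι] [DecidableEq ι] {A B : ι → Type*}
    [∀ i, Fintype (A i)] [∀ i, DecidableEq (A i)] [∀ i, Fintype (B i)] [∀ i, DecidableEq (B i)]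
    [∀ i, Nonempty (B i)] (m m' : ∀ i, A i) :
    (Fintype.card (∀ i, A i → B i) : ℝ)⁻¹ *
        ∑ 𝔟 : ∀ i, A i → B i, (if ∀ i, 𝔟 i (m i) = 𝔟 i (m' i) then 1 else 0) =
      ∏ i, if m i = m' i then 1 else (Fintype.card (B i) : ℝ)⁻¹ := by
  rw [prod_congr rfl fun i _ => (avg_apply_eq_apply (B := B i) (m i) (m' i)).symm,
    prod_mul_distrib, Fintype.prod_sum, prod_inv_distrib, ← Nat.cast_prod, ← Fintype.card_pi]
  congr 1
  refine sum_congr rfl fun 𝔟 _ => ?_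
  rw [prod_boole]
  simp

lemma prod_ite_one_eq_sum {ι R : Type*} [Fintype ι] [DecidableEq ι] [CommRing R]
    (P : ι → Prop) [DecidablePred P] (a : ι → R) :
    ∏ i, (if P i then a i else 1) =
      ∑ S : Finset ι, if ∀ i ∈ S, P i then ∏ i ∈ S, (a i - 1) else 0 := by
  rw [prod_ite, prod_const_one, mul_one]
  conv_lhs => rw [← prod_congr rfl fun i _ => sub_add_cancel (a i) 1]
  rw [prod_add, ← sum_filter]
  simp only [prod_const_one, mul_one]
  refine sum_congr ?_ fun _ _ => rfl
  ext S
  simp [subset_iff]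

lemma avg_sum_pushforward_binning_sq_mul {Ω Y ι : Type*} [Fintype Ω] [Fintype Y] [DecidableEq Y]
    [Fintype ι] [DecidableEq ι] {A B : ι → Type*} [∀ i, Fintype (A i)] [∀ i, DecidableEq (A i)]
    [∀ i, Fintype (B i)] [∀ i, DecidableEq (B i)] [∀ i, Nonempty (B i)]
    (side : Ω → Y) (msg : Ω → ∀ i, A i) (w : Ω → ℝ) (g : Y → ℝ) :
    (Fintype.card (∀ i, A i → B i) : ℝ)⁻¹ * ∑ 𝔟 : ∀ i, A i → B i,
        ∑ z, pushforward (fun ω => (side ω, fun i => 𝔟 i (msg ω i))) w z ^ 2 * g z.1 =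
      ∑ ω, ∑ ω', if side ω = side ω' then w ω * w ω' * g (side ω) *
        ∏ i, (if msg ω i = msg ω' i then 1 else (Fintype.card (B i) : ℝ)⁻¹) else 0 := by
  simp_rw [sum_pushforward_sq_mul, Prod.mk.injEq, funext_iff, mul_sum]
  rw [sum_comm]
  refine sum_congr rfl fun ω _ => ?_
  rw [sum_comm]
  refine sum_congr rfl fun ω' _ => ?_
  rw [← avg_forall_apply_eq_apply, ← mul_sum]
  split_ifs with h
  · simp only [h, true_and, mul_sum]
    exact sum_congr rfl fun 𝔟 _ => by split_ifs <;> ring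
  · simp [h]

end RandomBinning

section Chernoff

variable {X : Type*} [Fintype X] {q : X → ℝ}

lemma exists_pos_sum_mul_exp_lt_one (hq1 : ∑ x, q x = 1) {w : X → ℝ} {a : ℝ}
    (ha : a < ∑ x, q x * w x) :
    ∃ l > 0, ∑ x, q x * Real.exp (l * (a - w x)) < 1 := by
  set g : ℝ → ℝ := fun l => ∑ x, q x * Real.exp (l * (a - w x))
  have hderiv : HasDerivAt g (∑ x, q x * (a - w x)) 0 := by
    simpa using HasDerivAt.fun_sum (u := univ) fun x _ =>
      (((hasDerivAt_id 0).mul_const (a - w x)).exp).const_mul (q x)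
  have hneg : ∑ x, q x * (a - w x) < 0 := by
    simp only [mul_sub, sum_sub_distrib, ← sum_mul, hq1, one_mul]
    linarith
  obtain ⟨l, hslope, hl⟩ := ((hderiv.tendsto_slope_zero_right.eventually
    (eventually_lt_nhds hneg)).and self_mem_nhdsWithin).exists
  have hg0 : g 0 = 1 := by simp [g, hq1]
  rw [zero_add, hg0, smul_eq_mul] at hslope
  exact ⟨l, hl, sub_neg.mp (neg_of_mul_neg_right hslope (inv_nonneg.mpr (le_of_lt hl)))⟩

theorem chernoff_lower_tail (hq0 : ∀ x, 0 ≤ q x) (hq1 : ∑ x, q x = 1) (w : X → ℝ) {a : ℝ}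
    (ha : a < ∑ x, q x * w x) :
    ∃ ρ, 0 ≤ ρ ∧ ρ < 1 ∧ ∀ n : ℕ,
      ∑ ω : Fin n → X with ∑ j, w (ω j) < n * a, ∏ j, q (ω j) ≤ ρ ^ n := by
  obtain ⟨l, hl, hlt⟩ := exists_pos_sum_mul_exp_lt_one hq1 ha
  have hnonneg : ∀ x, 0 ≤ q x * Real.exp (l * (a - w x)) :=
    fun x => mul_nonneg (hq0 x) (Real.exp_pos _).le
  refine ⟨_, sum_nonneg fun x _ => hnonneg x, hlt, fun n => ?_⟩
  calc ∑ ω : Fin n → X with ∑ j, w (ω j) < n * a, ∏ j, q (ω j)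
      ≤ ∑ ω : Fin n → X with ∑ j, w (ω j) < n * a,
          ∏ j, q (ω j) * Real.exp (l * (a - w (ω j))) := by
        refine sum_le_sum fun ω hω => ?_
        rw [prod_mul_distrib, ← Real.exp_sum, ← mul_sum, sum_sub_distrib]
        refine le_mul_of_one_le_right (prod_nonneg fun j _ => hq0 _) (Real.one_le_exp ?_)
        have := (mem_filter.mp hω).2
        simp only [sum_const, card_univ, Fintype.card_fin, nsmul_eq_mul]
        nlinarith
    _ ≤ ∑ ω : Fin n → X, ∏ j, q (ω j) * Real.exp (l * (a - w (ω j))) :=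
        sum_le_sum_of_subset_of_nonneg (subset_univ _) fun ω _ _ =>
          prod_nonneg fun j _ => hnonneg _
    _ = (∑ x, q x * Real.exp (l * (a - w x))) ^ n := by
        rw [← Fintype.prod_sum (fun (_ : Fin n) x => q x * Real.exp (l * (a - w x)))]
        simp

end Chernoff

lemma exists_pos_forall_add_le {ι : Type*} [Finite ι] {a b : ι → ℝ} (h : ∀ i, a i < b i) :
    ∃ δ > 0, ∀ i, a i + δ ≤ b i := by
  have hev : ∀ᶠ δ in nhdsWithin (0 : ℝ) (Set.Ioi 0), ∀ i, a i + δ ≤ b i := by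
    refine Filter.eventually_all.mpr fun i => nhdsWithin_le_nhds ?_
    have hlim : Filter.Tendsto (fun δ : ℝ => a i + δ) (nhds 0) (nhds (a i)) :=
      (continuous_const.add continuous_id).tendsto' 0 (a i) (add_zero _)
    exact (hlim.eventually (eventually_lt_nhds (h i))).mono fun _ => le_of_lt
  obtain ⟨δ, hδ, hpos⟩ := (hev.and self_mem_nhdsWithin).exists
  exact ⟨δ, hpos, hδ⟩

lemma exists_le_two_rpow_neg_of_le_mul_pow {a : ℕ → ℝ} {D ρ : ℝ} (hρ0 : 0 ≤ ρ) (hρ1 : ρ < 1)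
    (ha : ∀ n, a n ≤ D * ρ ^ n) :
    ∃ κ : ℝ, 0 < κ ∧ ∃ N : ℕ, ∀ n ≥ N, a n ≤ (2 : ℝ) ^ (-(κ * n)) := by
  set r := (1 + ρ) / 2 with hr
  have hr0 : 0 < r := by positivity
  have hρr : ρ < r := by linarith
  refine ⟨-Real.logb 2 r, neg_pos.mpr (Real.logb_neg one_lt_two hr0 (by linarith)), ?_⟩
  have hlim : Filter.Tendsto (fun n : ℕ => D * (ρ / r) ^ n) Filter.atTop (nhds 0) := by
    simpa using (tendsto_pow_atTop_nhds_zero_of_lt_one (div_nonneg hρ0 hr0.le)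
      ((div_lt_one hr0).mpr hρr)).const_mul D
  obtain ⟨N, hN⟩ := Filter.eventually_atTop.mp (hlim.eventually (eventually_lt_nhds one_pos))
  refine ⟨N, fun n hn => ?_⟩
  calc a n ≤ D * ρ ^ n := ha n
    _ = D * (ρ / r) ^ n * r ^ n := by rw [div_pow]; field_simp
    _ ≤ 1 * r ^ n := by gcongr; exact (hN n hn).le
    _ = (2 : ℝ) ^ (-(-Real.logb 2 r * n)) := by
        rw [one_mul, neg_mul, neg_neg, Real.rpow_mul zero_le_two, Real.rpow_logb two_pos
          (by norm_num) hr0, Real.rpow_natCast]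

set_option linter.unusedSectionVars false

section Source

variable {p : ((∀ i, M i) × C) → ℝ}

lemma pC_nonneg (hp0 : ∀ x, 0 ≤ p x) (c : C) : 0 ≤ pC p c :=
  sum_nonneg fun _ _ => hp0 _

lemma sum_pC (hp1 : ∑ x, p x = 1) : ∑ c, pC p c = 1 := by
  rw [← hp1, Fintype.sum_prod_type, sum_comm]
  rfl

lemma le_pC (hp0 : ∀ x, 0 ≤ p x) (x : (∀ i, M i) × C) : p x ≤ pC p x.2 :=
  single_le_sum (f := fun m => p (m, x.2)) (fun _ _ => hp0 _) (mem_univ x.1)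

variable (p) in
lemma pSC_eq_pushforward (S : Finset (Fin t)) (f : ∀ i : S, M i.1) (c : C) :
    pSC p S f c = pushforward (Z := ∀ i : S, M i.1) (fun m i => m i.1) (fun m => p (m, c)) f := by
  simp only [pSC, pushforward, funext_iff]

lemma pSC_nonneg (hp0 : ∀ x, 0 ≤ p x) (S : Finset (Fin t)) (f : ∀ i : S, M i.1) (c : C) :
    0 ≤ pSC p S f c := by
  rw [pSC_eq_pushforward]
  exact pushforward_nonneg (fun _ => hp0 _) _ _

lemma le_pSC (hp0 : ∀ x, 0 ≤ p x) (S : Finset (Fin t)) (x : (∀ i, M i) × C) :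
    p x ≤ pSC p S (fun i => x.1 i) x.2 := by
  rw [pSC_eq_pushforward]
  exact le_pushforward (fun m => hp0 (m, x.2)) (fun m (i : S) => m i.1) x.1

lemma pSC_le_pC (hp0 : ∀ x, 0 ≤ p x) (S : Finset (Fin t)) (f : ∀ i : S, M i.1) (c : C) :
    pSC p S f c ≤ pC p c :=
  sum_le_sum fun m _ => by split_ifs <;> simp [hp0]

variable (p) in
def condInfo (S : Finset (Fin t)) (x : (∀ i, M i) × C) : ℝ :=
  -Real.logb 2 (pSC p S (fun i => x.1 i) x.2 / pC p x.2)

lemma condEnt_eq_sum_mul_condInfo (S : Finset (Fin t)) :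
    condEnt p S = ∑ x, p x * condInfo p S x := by
  have hfiber : ∀ c, ∑ f, pSC p S f c * Real.logb 2 (pSC p S f c / pC p c) =
      ∑ m, p (m, c) * Real.logb 2 (pSC p S (fun i => m i) c / pC p c) := fun c => by
    simp_rw [pSC_eq_pushforward p S _ c]
    exact sum_pushforward_mul _ _ fun f => Real.logb 2 (pushforward _ _ f / pC p c)
  rw [condEnt, sum_comm, sum_congr rfl fun c _ => hfiber c, Fintype.sum_prod_type, sum_comm,
    ← sum_neg_distrib]
  simp only [condInfo, mul_neg, sum_neg_distrib]

end Source

section Typical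

variable (p : ((∀ i, M i) × C) → ℝ) {n : ℕ}

def iidPmf (ω : Fin n → (∀ i, M i) × C) : ℝ := ∏ j, p (ω j)

def IsTypical (δ : ℝ) (ω : Fin n → (∀ i, M i) × C) : Prop :=
  ∀ S : Finset (Fin t), S.Nonempty → n * (condEnt p S - δ) ≤ ∑ j, condInfo p S (ω j)

open scoped Classical in
def typicalPmf (δ : ℝ) (ω : Fin n → (∀ i, M i) × C) : ℝ :=
  if IsTypical p δ ω then iidPmf p ω else 0

open scoped Classical in
def atypicalPmf (δ : ℝ) (ω : Fin n → (∀ i, M i) × C) : ℝ :=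
  if IsTypical p δ ω then 0 else iidPmf p ω

def atypicalMass (δ : ℝ) (n : ℕ) : ℝ := ∑ ω : Fin n → (∀ i, M i) × C, atypicalPmf p δ ω

variable {p}

lemma iidPmf_nonneg (hp0 : ∀ x, 0 ≤ p x) (ω : Fin n → (∀ i, M i) × C) : 0 ≤ iidPmf p ω :=
  prod_nonneg fun _ _ => hp0 _

lemma sum_iidPmf (hp1 : ∑ x, p x = 1) : ∑ ω : Fin n → (∀ i, M i) × C, iidPmf p ω = 1 := by
  simp [iidPmf, ← Fintype.prod_sum, hp1]

lemma typicalPmf_add_atypicalPmf (δ : ℝ) :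
    typicalPmf p δ + atypicalPmf p δ = iidPmf (n := n) p := by
  ext ω
  simp only [Pi.add_apply, typicalPmf, atypicalPmf]
  split_ifs <;> simp

lemma typicalPmf_nonneg (hp0 : ∀ x, 0 ≤ p x) (δ : ℝ) (ω : Fin n → (∀ i, M i) × C) :
    0 ≤ typicalPmf p δ ω := by
  unfold typicalPmf
  split_ifs <;> simp [iidPmf_nonneg hp0]

lemma atypicalPmf_nonneg (hp0 : ∀ x, 0 ≤ p x) (δ : ℝ) (ω : Fin n → (∀ i, M i) × C) :
    0 ≤ atypicalPmf p δ ω := by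
  unfold atypicalPmf
  split_ifs <;> simp [iidPmf_nonneg hp0]

lemma atypicalMass_nonneg (hp0 : ∀ x, 0 ≤ p x) (δ : ℝ) (n : ℕ) : 0 ≤ atypicalMass p δ n :=
  sum_nonneg fun ω _ => atypicalPmf_nonneg hp0 δ ω

lemma typicalPmf_le_iidPmf (hp0 : ∀ x, 0 ≤ p x) (δ : ℝ) (ω : Fin n → (∀ i, M i) × C) :
    typicalPmf p δ ω ≤ iidPmf p ω := by
  unfold typicalPmf
  split_ifs <;> simp [iidPmf_nonneg hp0]

lemma sum_typicalPmf (hp1 : ∑ x, p x = 1) (δ : ℝ) :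
    ∑ ω : Fin n → (∀ i, M i) × C, typicalPmf p δ ω = 1 - atypicalMass p δ n := by
  rw [atypicalMass, ← sum_iidPmf (n := n) hp1, ← typicalPmf_add_atypicalPmf δ]
  simp only [Pi.add_apply, sum_add_distrib]
  ring

lemma atypicalMass_le_sum (hp0 : ∀ x, 0 ≤ p x) (δ : ℝ) (n : ℕ) :
    atypicalMass p δ n ≤ ∑ S : Finset (Fin t),
      ∑ ω : Fin n → (∀ i, M i) × C with ∑ j, condInfo p S (ω j) < n * (condEnt p S - δ),
        iidPmf p ω := by
  simp_rw [atypicalMass, sum_filter]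
  rw [sum_comm]
  refine sum_le_sum fun ω _ => ?_
  unfold atypicalPmf
  split_ifs with hω
  · exact sum_nonneg fun S _ => by split_ifs <;> simp [iidPmf_nonneg hp0]
  · obtain ⟨S, -, hS⟩ : ∃ S : Finset (Fin t), S.Nonempty ∧
        ∑ j, condInfo p S (ω j) < n * (condEnt p S - δ) := by
      simpa [IsTypical] using hω
    refine le_of_eq_of_le (if_pos hS).symm (single_le_sum (f := fun S =>
      if ∑ j, condInfo p S (ω j) < n * (condEnt p S - δ) then iidPmf p ω else 0)
      (fun S _ => by split_ifs <;> simp [iidPmf_nonneg hp0]) (mem_univ S))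

lemma exists_atypicalMass_le (hp0 : ∀ x, 0 ≤ p x) (hp1 : ∑ x, p x = 1) {δ : ℝ} (hδ : 0 < δ) :
    ∃ ρ, 0 ≤ ρ ∧ ρ < 1 ∧ ∀ n, atypicalMass p δ n ≤ 2 ^ t * ρ ^ n := by
  have hchernoff : ∀ S : Finset (Fin t), ∃ ρ, 0 ≤ ρ ∧ ρ < 1 ∧ ∀ n : ℕ,
      ∑ ω : Fin n → (∀ i, M i) × C with ∑ j, condInfo p S (ω j) < n * (condEnt p S - δ),
        iidPmf p ω ≤ ρ ^ n := fun S =>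
    chernoff_lower_tail hp0 hp1 (condInfo p S)
      (by rw [← condEnt_eq_sum_mul_condInfo]; linarith)
  choose ρ hρ0 hρ1 hρ using hchernoff
  refine ⟨univ.sup' univ_nonempty ρ, (hρ0 ∅).trans (le_sup' ρ (mem_univ _)),
    (sup'_lt_iff _).mpr fun S _ => hρ1 S, fun n => (atypicalMass_le_sum hp0 δ n).trans ?_⟩
  calc _ ≤ ∑ _S : Finset (Fin t), (univ.sup' univ_nonempty ρ) ^ n :=
        sum_le_sum fun S _ => (hρ S n).trans (pow_le_pow_left₀ (hρ0 S) (le_sup' ρ (mem_univ S)) n)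
    _ = 2 ^ t * (univ.sup' univ_nonempty ρ) ^ n := by simp

end Typical

section Binning

variable {p : ((∀ i, M i) × C) → ℝ} (R : Fin t → ℝ) {n : ℕ}

instance (n : ℕ) (i : Fin t) : NeZero (nbins R n i) :=
  ⟨(Nat.ceil_pos.mpr (Real.rpow_pos_of_pos two_pos _)).ne'⟩

lemma one_le_nbins (n : ℕ) (i : Fin t) : (1 : ℝ) ≤ nbins R n i := by
  exact_mod_cast NeZero.one_le

lemma prod_nbins_mul_prod_ite_eq_sum (n : ℕ) (e : Fin t → Prop) [DecidablePred e] :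
    (∏ i, (nbins R n i : ℝ)) * ∏ i, (if e i then 1 else (nbins R n i : ℝ)⁻¹) =
      ∑ S : Finset (Fin t), if ∀ i ∈ S, e i then ∏ i ∈ S, ((nbins R n i : ℝ) - 1) else 0 := by
  rw [← prod_mul_distrib]
  convert prod_ite_one_eq_sum e (fun i => (nbins R n i : ℝ)) using 3 with i
  split_ifs <;> simp [NeZero.ne]

lemma nbins_sub_one_le (n : ℕ) (i : Fin t) : (nbins R n i : ℝ) - 1 ≤ 2 ^ (n * R i) := by
  have := Nat.ceil_lt_add_one (Real.rpow_nonneg zero_le_two ((n : ℝ) * R i))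
  rw [nbins]
  linarith

def binOutput (𝔟 : ∀ i, (Fin n → M i) → Fin (nbins R n i)) (ω : Fin n → (∀ i, M i) × C) :
    (Fin n → C) × ∀ i, Fin (nbins R n i) :=
  (fun j => (ω j).2, fun i => 𝔟 i fun j => (ω j).1 i)

lemma Pind_eq_pushforward (𝔟 : ∀ i, (Fin n → M i) → Fin (nbins R n i)) (c : Fin n → C)
    (mb : ∀ i, Fin (nbins R n i)) :
    Pind p R n 𝔟 c mb = pushforward (binOutput R 𝔟) (iidPmf p) (c, mb) := by
  simp only [Pind, pushforward, binOutput, Prod.mk.injEq, funext_iff, iidPmf]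

lemma Qideal_inv (c : Fin n → C) (mb : ∀ i, Fin (nbins R n i)) :
    (Qideal p R n c mb)⁻¹ = (∏ j, pC p (c j))⁻¹ * ∏ i, (nbins R n i : ℝ) := by
  rw [Qideal, mul_inv, prod_inv_distrib, inv_inv]

lemma Qideal_nonneg (hp0 : ∀ x, 0 ≤ p x) (c : Fin n → C) (mb : ∀ i, Fin (nbins R n i)) :
    0 ≤ Qideal p R n c mb :=
  mul_nonneg (prod_nonneg fun _ _ => pC_nonneg hp0 _) (prod_nonneg fun _ _ => by positivity)

lemma sum_Qideal (hp1 : ∑ x, p x = 1) :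
    ∑ z : (Fin n → C) × ∀ i, Fin (nbins R n i), Qideal p R n z.1 z.2 = 1 := by
  have hC : ∑ c : Fin n → C, ∏ j, pC p (c j) = 1 := by
    rw [← Fintype.prod_sum]
    simp [sum_pC hp1]
  have hk : (∏ i, (nbins R n i : ℝ)) * ∏ i, (nbins R n i : ℝ)⁻¹ = 1 := by
    rw [← prod_mul_distrib]
    exact prod_eq_one fun i _ => mul_inv_cancel₀ (by simp [NeZero.ne])
  simp only [Qideal, Fintype.sum_prod_type, sum_const, card_univ, Fintype.card_pi,
    Fintype.card_fin, nsmul_eq_mul, Nat.cast_prod]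
  calc _ = ∑ c : Fin n → C, (∏ j, pC p (c j)) *
        ((∏ i, (nbins R n i : ℝ)) * ∏ i, (nbins R n i : ℝ)⁻¹) := sum_congr rfl fun c _ => by ring
    _ = 1 := by rw [hk, ← sum_mul, hC, one_mul]

lemma pushforward_typicalPmf_eq_zero (hp0 : ∀ x, 0 ≤ p x) (δ : ℝ)
    (𝔟 : ∀ i, (Fin n → M i) → Fin (nbins R n i)) {z : (Fin n → C) × ∀ i, Fin (nbins R n i)}
    (hz : Qideal p R n z.1 z.2 = 0) :
    pushforward (binOutput R 𝔟) (typicalPmf p δ) z = 0 := by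
  obtain ⟨j, -, hj⟩ : ∃ j ∈ univ, pC p (z.1 j) = 0 := by
    simpa [Qideal, prod_eq_zero_iff, NeZero.ne] using hz
  refine pushforward_eq_zero fun ω hω => le_antisymm ?_ (typicalPmf_nonneg hp0 δ ω)
  have hωj : p (ω j) = 0 := le_antisymm (hj ▸ hω ▸ le_pC hp0 (ω j)) (hp0 _)
  exact (typicalPmf_le_iidPmf hp0 δ ω).trans_eq (prod_eq_zero (mem_univ j) hωj)

end Binning

section Collision

variable {p : ((∀ i, M i) × C) → ℝ} {n : ℕ}

abbrev AgreeOn (S : Finset (Fin t)) (ω ω' : Fin n → (∀ i, M i) × C) : Prop :=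
  (fun j => (ω j).2) = (fun j => (ω' j).2) ∧ ∀ i ∈ S, (fun j => (ω j).1 i) = fun j => (ω' j).1 i

lemma sum_iidPmf_agreeOn (S : Finset (Fin t)) (ω : Fin n → (∀ i, M i) × C) :
    ∑ ω' : Fin n → (∀ i, M i) × C,
      (if AgreeOn S ω ω' then iidPmf p ω' else 0) =
      ∏ j, pSC p S (fun i => (ω j).1 i) (ω j).2 := by
  have hfactor : ∀ ω' : Fin n → (∀ i, M i) × C,
      (if AgreeOn S ω ω' then iidPmf p ω' else 0) =
      ∏ j, if (ω j).2 = (ω' j).2 ∧ ∀ i ∈ S, (ω j).1 i = (ω' j).1 i then p (ω' j) else 0 := by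
    intro ω'
    have hiff : AgreeOn S ω ω' ↔
        ∀ j ∈ univ, (ω j).2 = (ω' j).2 ∧ ∀ i ∈ S, (ω j).1 i = (ω' j).1 i := by
      simp only [AgreeOn, funext_iff, mem_univ, true_imp_iff, forall_and]
      exact and_congr_right' ⟨fun h j i hi => h i hi j, fun h i hi j => h j i hi⟩
    rw [prod_ite_zero, iidPmf]
    by_cases h : AgreeOn S ω ω'
    · rw [if_pos h, if_pos (hiff.mp h)]
    · rw [if_neg h, if_neg (mt hiff.mpr h)]
  rw [sum_congr rfl fun ω' _ => hfactor ω', ← Fintype.prod_sum (fun j (x : (∀ i, M i) × C) =>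
    if (ω j).2 = x.2 ∧ ∀ i ∈ S, (ω j).1 i = x.1 i then p x else 0)]
  refine prod_congr rfl fun j _ => ?_
  rw [Fintype.sum_prod_type, pSC]
  refine sum_congr rfl fun m _ => ?_
  simp [ite_and, eq_comm]

variable (p) in
def collisionMass (δ : ℝ) (S : Finset (Fin t)) (n : ℕ) : ℝ :=
  ∑ ω : Fin n → (∀ i, M i) × C,
    typicalPmf p δ ω * ∏ j, pSC p S (fun i => (ω j).1 i) (ω j).2 / pC p (ω j).2

lemma sum_sum_agreeOn_le_collisionMass (hp0 : ∀ x, 0 ≤ p x) (δ : ℝ) (S : Finset (Fin t)) :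
    ∑ ω : Fin n → (∀ i, M i) × C, ∑ ω',
      (if AgreeOn S ω ω' then
        typicalPmf p δ ω * typicalPmf p δ ω' * (∏ j, pC p (ω j).2)⁻¹ else 0) ≤
      collisionMass p δ S n := by
  refine sum_le_sum fun ω _ => ?_
  have hcoef : 0 ≤ typicalPmf p δ ω * (∏ j, pC p (ω j).2)⁻¹ :=
    mul_nonneg (typicalPmf_nonneg hp0 δ ω) (inv_nonneg.mpr (prod_nonneg fun _ _ => pC_nonneg hp0 _))
  calc _ = typicalPmf p δ ω * (∏ j, pC p (ω j).2)⁻¹ * ∑ ω',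
        (if AgreeOn S ω ω' then typicalPmf p δ ω' else 0) := by
        rw [mul_sum]
        exact sum_congr rfl fun ω' _ => by split_ifs <;> ring
    _ ≤ typicalPmf p δ ω * (∏ j, pC p (ω j).2)⁻¹ * ∑ ω',
        (if AgreeOn S ω ω' then iidPmf p ω' else 0) := by
        gcongr with ω'
        split_ifs
        exacts [typicalPmf_le_iidPmf hp0 δ ω', le_rfl]
    _ = _ := by rw [sum_iidPmf_agreeOn, prod_div_distrib]; ring

lemma avg_sum_sq_div_Qideal_le (R : Fin t → ℝ) (hp0 : ∀ x, 0 ≤ p x) (δ : ℝ) :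
    (Fintype.card (∀ i, (Fin n → M i) → Fin (nbins R n i)) : ℝ)⁻¹ *
        ∑ 𝔟 : ∀ i, (Fin n → M i) → Fin (nbins R n i), ∑ z,
          pushforward (binOutput R 𝔟) (typicalPmf p δ) z ^ 2 / Qideal p R n z.1 z.2 ≤
      ∑ S : Finset (Fin t), (∏ i ∈ S, ((nbins R n i : ℝ) - 1)) * collisionMass p δ S n := by
  simp_rw [div_eq_mul_inv, Qideal_inv]
  erw [avg_sum_pushforward_binning_sq_mul (B := fun i => Fin (nbins R n i)) (fun ω j => (ω j).2)
    (fun ω i j => (ω j).1 i) (typicalPmf p δ) fun c => (∏ j, pC p (c j))⁻¹ * ∏ i, (nbins R n i : ℝ)]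
  simp only [Fintype.card_fin]
  calc _ = ∑ ω : Fin n → (∀ i, M i) × C, ∑ ω', ∑ S : Finset (Fin t),
        (∏ i ∈ S, ((nbins R n i : ℝ) - 1)) *
          (if AgreeOn S ω ω' then
            typicalPmf p δ ω * typicalPmf p δ ω' * (∏ j, pC p (ω j).2)⁻¹ else 0) := by
        refine sum_congr rfl fun ω _ => sum_congr rfl fun ω' _ => ?_
        split_ifs with h
        · rw [show ∀ a b c d : ℝ, a * (b * c) * d = a * b * (c * d) from fun _ _ _ _ => by ring,
            prod_nbins_mul_prod_ite_eq_sum, mul_sum]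
          exact sum_congr rfl fun S _ => by simp only [AgreeOn, h, true_and]; split_ifs <;> ring
        · simp [AgreeOn, h]
    _ = ∑ S : Finset (Fin t), (∏ i ∈ S, ((nbins R n i : ℝ) - 1)) *
          ∑ ω : Fin n → (∀ i, M i) × C, ∑ ω',
            (if AgreeOn S ω ω' then
              typicalPmf p δ ω * typicalPmf p δ ω' * (∏ j, pC p (ω j).2)⁻¹ else 0) := by
        simp_rw [mul_sum]
        exact (sum_congr rfl fun ω _ => sum_comm).trans sum_comm
    _ ≤ _ := by
        gcongr with S
        · exact prod_nonneg fun i _ => sub_nonneg.mpr (one_le_nbins R n i)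
        · exact sum_sum_agreeOn_le_collisionMass hp0 δ S

lemma collisionMass_nonneg (hp0 : ∀ x, 0 ≤ p x) (δ : ℝ) (S : Finset (Fin t)) :
    0 ≤ collisionMass p δ S n :=
  sum_nonneg fun ω _ => mul_nonneg (typicalPmf_nonneg hp0 δ ω)
    (prod_nonneg fun _ _ => div_nonneg (pSC_nonneg hp0 _ _ _) (pC_nonneg hp0 _))

lemma collisionMass_le (hp0 : ∀ x, 0 ≤ p x) (hp1 : ∑ x, p x = 1) (δ : ℝ) (S : Finset (Fin t)) :
    collisionMass p δ S n ≤ 1 - atypicalMass p δ n := by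
  rw [← sum_typicalPmf hp1 δ]
  refine sum_le_sum fun ω _ => mul_le_of_le_one_right (typicalPmf_nonneg hp0 δ ω) ?_
  exact prod_le_one (fun j _ => div_nonneg (pSC_nonneg hp0 _ _ _) (pC_nonneg hp0 _))
    fun j _ => div_le_one_of_le₀ (pSC_le_pC hp0 _ _ _) (pC_nonneg hp0 _)

lemma pSC_div_pC_eq_rpow (hp0 : ∀ x, 0 ≤ p x) (S : Finset (Fin t)) {x : (∀ i, M i) × C}
    (hx : 0 < p x) : pSC p S (fun i => x.1 i) x.2 / pC p x.2 = 2 ^ (-condInfo p S x) := by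
  rw [condInfo, neg_neg, Real.rpow_logb two_pos (by norm_num)
    (div_pos (hx.trans_le (le_pSC hp0 S x)) (hx.trans_le (le_pC hp0 x)))]

lemma collisionMass_le_rpow (hp0 : ∀ x, 0 ≤ p x) (hp1 : ∑ x, p x = 1) (δ : ℝ)
    {S : Finset (Fin t)} (hS : S.Nonempty) :
    collisionMass p δ S n ≤ 2 ^ (-(n * (condEnt p S - δ))) := by
  have hterm : ∀ ω : Fin n → (∀ i, M i) × C,
      typicalPmf p δ ω * ∏ j, pSC p S (fun i => (ω j).1 i) (ω j).2 / pC p (ω j).2 ≤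
        typicalPmf p δ ω * 2 ^ (-(n * (condEnt p S - δ))) := by
    intro ω
    by_cases hT : IsTypical p δ ω
    · by_cases hpos : ∀ j, 0 < p (ω j)
      · gcongr
        · exact typicalPmf_nonneg hp0 δ ω
        rw [prod_congr rfl fun j _ => pSC_div_pC_eq_rpow hp0 S (hpos j),
          ← Real.rpow_sum_of_pos two_pos, sum_neg_distrib]
        exact Real.rpow_le_rpow_of_exponent_le one_le_two (neg_le_neg (hT S hS))
      · obtain ⟨j, hj⟩ := not_forall.mp hpos
        have hzero : typicalPmf p δ ω = 0 :=
          le_antisymm ((typicalPmf_le_iidPmf hp0 δ ω).trans_eq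
            (prod_eq_zero (mem_univ j) (le_antisymm (not_lt.mp hj) (hp0 _))))
            (typicalPmf_nonneg hp0 δ ω)
        simp [hzero]
    · simp [typicalPmf, hT]
  calc collisionMass p δ S n ≤ ∑ ω, typicalPmf p δ ω * 2 ^ (-(n * (condEnt p S - δ))) :=
        sum_le_sum fun ω _ => hterm ω
    _ ≤ 2 ^ (-(n * (condEnt p S - δ))) := by
        rw [← sum_mul, sum_typicalPmf hp1 δ]
        exact mul_le_of_le_one_left (by positivity)
          (by linarith [atypicalMass_nonneg hp0 δ n])

lemma prod_nbins_sub_one_mul_collisionMass_le (R : Fin t → ℝ) (hp0 : ∀ x, 0 ≤ p x)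
    (hp1 : ∑ x, p x = 1) {δ : ℝ} {S : Finset (Fin t)} (hS : S.Nonempty)
    (hgap : ∑ i ∈ S, R i + 2 * δ ≤ condEnt p S) :
    (∏ i ∈ S, ((nbins R n i : ℝ) - 1)) * collisionMass p δ S n ≤ (2 ^ (-δ)) ^ n := by
  have hbins : ∏ i ∈ S, ((nbins R n i : ℝ) - 1) ≤ 2 ^ (n * ∑ i ∈ S, R i) := by
    rw [mul_sum, Real.rpow_sum_of_pos two_pos]
    exact prod_le_prod (fun i _ => sub_nonneg.mpr (one_le_nbins R n i))
      fun i _ => nbins_sub_one_le R n i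
  calc _ ≤ 2 ^ (n * ∑ i ∈ S, R i) * 2 ^ (-(n * (condEnt p S - δ))) :=
        mul_le_mul hbins (collisionMass_le_rpow hp0 hp1 δ hS) (collisionMass_nonneg hp0 δ S)
          (by positivity)
    _ = 2 ^ (n * ∑ i ∈ S, R i - n * (condEnt p S - δ)) := by
        rw [← Real.rpow_add two_pos, ← sub_eq_add_neg]
    _ ≤ 2 ^ (-δ * n) :=
        Real.rpow_le_rpow_of_exponent_le one_le_two (by nlinarith [n.cast_nonneg (α := ℝ)])
    _ = (2 ^ (-δ)) ^ n := by rw [Real.rpow_mul zero_le_two, Real.rpow_natCast]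

end Collision

section Main

variable {p : ((∀ i, M i) × C) → ℝ} {R : Fin t → ℝ} {n : ℕ}

variable (p R) in
def typicalChiSq (δ : ℝ) (𝔟 : ∀ i, (Fin n → M i) → Fin (nbins R n i)) : ℝ :=
  chiSq (pushforward (binOutput R 𝔟) (typicalPmf p δ)) fun z => Qideal p R n z.1 z.2

lemma card_binnings_pos (n : ℕ) :
    (0 : ℝ) < Fintype.card (∀ i, (Fin n → M i) → Fin (nbins R n i)) := by
  exact_mod_cast Fintype.card_pos

lemma sum_abs_Pind_sub_Qideal_le (hp0 : ∀ x, 0 ≤ p x) (hp1 : ∑ x, p x = 1) (δ : ℝ)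
    (𝔟 : ∀ i, (Fin n → M i) → Fin (nbins R n i)) :
    ∑ c, ∑ mb, |Pind p R n 𝔟 c mb - Qideal p R n c mb| ≤
      √(typicalChiSq p R δ 𝔟) + atypicalMass p δ n := by
  simp_rw [Pind_eq_pushforward, ← typicalPmf_add_atypicalPmf δ]
  rw [← Fintype.sum_prod_type' fun c mb =>
    |pushforward (binOutput R 𝔟) (typicalPmf p δ + atypicalPmf p δ) (c, mb) - Qideal p R n c mb|]
  refine (sum_abs_pushforward_add_sub_le (atypicalPmf_nonneg hp0 δ) _ _).trans ?_
  exact add_le_add (sum_abs_sub_le_sqrt_chiSq (fun z => Qideal_nonneg R hp0 z.1 z.2)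
    (sum_Qideal R hp1) fun z hz => pushforward_typicalPmf_eq_zero R hp0 δ 𝔟 hz) le_rfl

lemma Ebin_le (hp0 : ∀ x, 0 ≤ p x) (hp1 : ∑ x, p x = 1) (δ : ℝ) (n : ℕ) :
    Ebin p R n ≤ 2⁻¹ * (√((Fintype.card (∀ i, (Fin n → M i) → Fin (nbins R n i)) : ℝ)⁻¹ *
        ∑ 𝔟 : ∀ i, (Fin n → M i) → Fin (nbins R n i), typicalChiSq p R δ 𝔟) +
          atypicalMass p δ n) := by
  calc Ebin p R n ≤ (Fintype.card (∀ i, (Fin n → M i) → Fin (nbins R n i)) : ℝ)⁻¹ *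
        ∑ 𝔟, 2⁻¹ * (√(typicalChiSq p R δ 𝔟) + atypicalMass p δ n) := by
        unfold Ebin
        gcongr with 𝔟
        exact sum_abs_Pind_sub_Qideal_le hp0 hp1 δ 𝔟
    _ = 2⁻¹ * ((Fintype.card (∀ i, (Fin n → M i) → Fin (nbins R n i)) : ℝ)⁻¹ *
        ∑ 𝔟, √(typicalChiSq p R δ 𝔟) + atypicalMass p δ n) := by
        rw [← mul_sum, sum_add_distrib, sum_const, card_univ, nsmul_eq_mul]
        field_simp
    _ ≤ _ := by
        gcongr
        exact avg_sqrt_le_sqrt_avg fun 𝔟 => chiSq_nonneg fun z => Qideal_nonneg R hp0 z.1 z.2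

lemma avg_typicalChiSq_le (hp0 : ∀ x, 0 ≤ p x) (hp1 : ∑ x, p x = 1) (δ : ℝ) (n : ℕ) :
    (Fintype.card (∀ i, (Fin n → M i) → Fin (nbins R n i)) : ℝ)⁻¹ *
        ∑ 𝔟 : ∀ i, (Fin n → M i) → Fin (nbins R n i), typicalChiSq p R δ 𝔟 ≤
      atypicalMass p δ n +
        ∑ S ∈ univ.erase ∅, (∏ i ∈ S, ((nbins R n i : ℝ) - 1)) * collisionMass p δ S n := by
  have hchiSq : ∀ 𝔟 : ∀ i, (Fin n → M i) → Fin (nbins R n i), typicalChiSq p R δ 𝔟 =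
      ∑ z, pushforward (binOutput R 𝔟) (typicalPmf p δ) z ^ 2 / Qideal p R n z.1 z.2 +
        (2 * atypicalMass p δ n - 1) := fun 𝔟 => by
    rw [typicalChiSq, chiSq_eq fun z hz => pushforward_typicalPmf_eq_zero R hp0 δ 𝔟 hz,
      sum_pushforward, sum_typicalPmf hp1, sum_Qideal R hp1]
    ring
  have hcollision := avg_sum_sq_div_Qideal_le R hp0 δ (n := n)
  rw [← add_sum_erase (univ : Finset (Finset (Fin t))) _ (mem_univ ∅), prod_empty, one_mul]
    at hcollision
  simp_rw [hchiSq]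
  rw [sum_add_distrib, mul_add, sum_const, card_univ, nsmul_eq_mul, ← mul_assoc,
    inv_mul_cancel₀ (card_binnings_pos n).ne', one_mul]
  linarith [collisionMass_le hp0 hp1 δ ∅ (n := n)]

lemma sum_prod_nbins_sub_one_mul_collisionMass_le (hp0 : ∀ x, 0 ≤ p x) (hp1 : ∑ x, p x = 1)
    {δ : ℝ} (hgap : ∀ S : Finset (Fin t), S.Nonempty → ∑ i ∈ S, R i + 2 * δ ≤ condEnt p S)
    (n : ℕ) :
    ∑ S ∈ univ.erase ∅, (∏ i ∈ S, ((nbins R n i : ℝ) - 1)) * collisionMass p δ S n ≤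
      2 ^ t * (2 ^ (-δ)) ^ n := by
  calc _ ≤ ∑ S ∈ univ.erase (∅ : Finset (Fin t)), ((2 : ℝ) ^ (-δ)) ^ n := by
        refine sum_le_sum fun S hS => ?_
        have hS : S.Nonempty := nonempty_iff_ne_empty.mpr (ne_of_mem_erase hS)
        exact prod_nbins_sub_one_mul_collisionMass_le R hp0 hp1 hS (hgap S hS)
    _ ≤ 2 ^ t * (2 ^ (-δ)) ^ n := by
        rw [sum_const, nsmul_eq_mul]
        gcongr
        exact_mod_cast card_erase_le.trans (by simp)

lemma exists_Ebin_le_mul_pow (hp0 : ∀ x, 0 ≤ p x) (hp1 : ∑ x, p x = 1)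
    (hrate : ∀ S : Finset (Fin t), S.Nonempty → ∑ i ∈ S, R i < condEnt p S) :
    ∃ D ρ : ℝ, 0 ≤ ρ ∧ ρ < 1 ∧ ∀ n, Ebin p R n ≤ D * ρ ^ n := by
  obtain ⟨δ, hδ, hgap⟩ := exists_pos_forall_add_le
    (ι := {S : Finset (Fin t) // S.Nonempty}) fun S => hrate S.1 S.2
  obtain ⟨ρ, hρ0, hρ1, hatyp⟩ := exists_atypicalMass_le hp0 hp1 (half_pos hδ)
  set σ := max ρ (2 ^ (-(δ / 2)))
  have hσ0 : 0 ≤ σ := hρ0.trans (le_max_left _ _)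
  have hσ1 : σ < 1 := max_lt hρ1 (Real.rpow_lt_one_of_one_lt_of_neg one_lt_two (by linarith))
  -- `χ²` and the atypical mass are `O(σⁿ)`, and the total variation is of order `√χ²`.
  refine ⟨2 ^ t + √(2 * 2 ^ t), √σ, Real.sqrt_nonneg σ,
    (Real.sqrt_lt' one_pos).mpr (by rwa [one_pow]), fun n => ?_⟩
  have hatyp' : atypicalMass p (δ / 2) n ≤ 2 ^ t * σ ^ n :=
    (hatyp n).trans (by gcongr; exact le_max_left _ _)
  have hcollision := (sum_prod_nbins_sub_one_mul_collisionMass_le (R := R) hp0 hp1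
    (fun S hS => by linarith [hgap ⟨S, hS⟩]) n).trans
      (by gcongr; exact le_max_right _ _ : 2 ^ t * ((2 : ℝ) ^ (-(δ / 2))) ^ n ≤ 2 ^ t * σ ^ n)
  have hsqrt : √σ ^ n ≤ 1 := pow_le_one₀ (Real.sqrt_nonneg σ) (Real.sqrt_le_one.mpr hσ1.le)
  have hσn : σ ^ n = √σ ^ n * √σ ^ n := by rw [← mul_pow, Real.mul_self_sqrt hσ0]
  calc Ebin p R n ≤ 2⁻¹ * (√(2 * 2 ^ t * σ ^ n) + 2 ^ t * σ ^ n) := by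
        refine (Ebin_le hp0 hp1 (δ / 2) n).trans (mul_le_mul_of_nonneg_left
          (add_le_add (Real.sqrt_le_sqrt ?_) hatyp') (by norm_num))
        linarith [avg_typicalChiSq_le (R := R) hp0 hp1 (δ / 2) n]
    _ = 2⁻¹ * (√(2 * 2 ^ t) * √σ ^ n + 2 ^ t * σ ^ n) := by
        rw [Real.sqrt_mul (by positivity), hσn, Real.sqrt_mul_self (by positivity)]
    _ ≤ (2 ^ t + √(2 * 2 ^ t)) * √σ ^ n := by
        rw [hσn]
        nlinarith [Real.sqrt_nonneg (2 * 2 ^ t), pow_nonneg (Real.sqrt_nonneg σ) n,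
          mul_le_mul_of_nonneg_left hsqrt (pow_nonneg (Real.sqrt_nonneg σ) n),
          pow_pos (two_pos (α := ℝ)) t]

end Main

theorem osrb_exponential_general (p : ((∀ i, M i) × C) → ℝ)
    (hp0 : ∀ x, 0 ≤ p x) (hp1 : ∑ x, p x = 1)
    (R : Fin t → ℝ)
    (hrate : ∀ S : Finset (Fin t), S.Nonempty → ∑ i ∈ S, R i < condEnt p S) :
    ∃ κ : ℝ, 0 < κ ∧ ∃ N : ℕ, ∀ n ≥ N, Ebin p R n ≤ (2 : ℝ) ^ (-(κ * (n : ℝ))) := by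
  obtain ⟨D, ρ, hρ0, hρ1, hEbin⟩ := exists_Ebin_le_mul_pow hp0 hp1 hrate
  exact exists_le_two_rpow_neg_of_le_mul_pow hρ0 hρ1 hEbin

/-- **Exponentially fast OSRB.** If `∑_{i∈S} Rᵢ < H(M_S | C)` for every nonempty
`S ⊆ [t]`, then the expected total variation distance between the induced pmf of
`(C([n]), M̄₁, …, M̄_t)` and the ideal pmf is eventually at most `2^{−κn}` for some
constant `κ > 0`. -/
theorem osrb_exponential (p : ((∀ i, M i) × C) → ℝ)
    (hp0 : ∀ x, 0 ≤ p x) (hp1 : ∑ x, p x = 1)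
    (R : Fin t → ℝ) (hR : ∀ i, 0 < R i)
    (hrate : ∀ S : Finset (Fin t), S.Nonempty → ∑ i ∈ S, R i < condEnt p S) :
    ∃ κ : ℝ, 0 < κ ∧ ∃ N : ℕ, ∀ n ≥ N, Ebin p R n ≤ (2 : ℝ) ^ (-(κ * (n : ℝ))) :=
  osrb_exponential_general p hp0 hp1 R hrate

end OSRB
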